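/- arXiv:2401.16198 — 2 statements merged into one kernel-verified Lean document; each statement's English description precedes it below -/
import Mathlib

section
/- In the exponential instance, let π be any valid free-fall dynamic linear contract whose first segment has α^1 = α_{i−1,i} and a^1 = i for some 2 ≤ i ≤ n−1 (i.e., π begins at an indifference point strictly below the top indifference point α_{n−1,n}). Then there exists a valid free-fall dynamic linear contract π′ with Util(π′) > Util(π). Consequently, any optimal free-fall contract for this instance must begin at the top indifference point α_{n−1,n}. -/
open Finset

/-- Indifference point `α_{i,i+1}` between actions `i` and `i+1`. -/
noncomputable def indiff (c R : ℕ → ℝ) (i : ℕ) : ℝ :=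
  (c (i + 1) - c i) / (R (i + 1) - R i)

/-- Breakpoint `α_{i,i+1}` with the convention `α_{0,1} := 0`. -/
noncomputable def bp (c R : ℕ → ℝ) (i : ℕ) : ℝ :=
  if i = 0 then 0 else indiff c R i

/-- A linear contract instance with `n ≥ 2` actions indexed `1,…,n`:
costs `0 = c_1 < … < c_n`, rewards `0 ≤ R_1 < … < R_n`, and indifference
points satisfying `0 < α_{1,2} < … < α_{n-1,n} ≤ 1`. -/
def LinInstance (n : ℕ) (c R : ℕ → ℝ) : Prop :=
  2 ≤ n ∧ c 1 = 0 ∧ 0 ≤ R 1 ∧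
    (∀ i, 1 ≤ i → i < n → c i < c (i + 1)) ∧
    (∀ i, 1 ≤ i → i < n → R i < R (i + 1)) ∧
    0 < indiff c R 1 ∧
    (∀ i, 1 ≤ i → i + 1 ≤ n - 1 → indiff c R i < indiff c R (i + 1)) ∧
    indiff c R (n - 1) ≤ 1

/-- Best-response set of the agent to the linear contract with scalar `x`. -/
def BR (n : ℕ) (c R : ℕ → ℝ) (x : ℝ) : Set ℕ :=
  {i | i ∈ Finset.Icc 1 n ∧ ∀ j ∈ Finset.Icc 1 n, x * R j - c j ≤ x * R i - c i}

/-- A dynamic linear contract with `K` segments (indexed `1,…,K`):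
scalars `α`, durations `τ`, and actions `a`. -/
structure DLC where
  K : ℕ
  α : ℕ → ℝ
  τ : ℕ → ℝ
  a : ℕ → ℕ

namespace DLC

/-- Total duration of the first `k` segments. -/
noncomputable def Tsum (π : DLC) (k : ℕ) : ℝ := ∑ j ∈ Finset.Icc 1 k, π.τ j

/-- Cumulative scalar contract of the first `k` segments. -/
noncomputable def Asum (π : DLC) (k : ℕ) : ℝ := ∑ j ∈ Finset.Icc 1 k, π.α j * π.τ j

/-- Time-averaged contract `ᾱ^k` after the first `k` segments. -/
noncomputable def avg (π : DLC) (k : ℕ) : ℝ := π.Asum k / π.Tsum k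

/-- Validity: positive durations, nonnegative scalars, actions in `{1,…,n}`,
and each action is a best response to the historical average contract at the
end of its segment, and (for `k ≥ 2`) also at its beginning. -/
def Valid (n : ℕ) (c R : ℕ → ℝ) (π : DLC) : Prop :=
  1 ≤ π.K ∧
    (∀ k ∈ Finset.Icc 1 π.K, 0 ≤ π.α k ∧ 0 < π.τ k ∧ π.a k ∈ Finset.Icc 1 n) ∧
    (∀ k ∈ Finset.Icc 1 π.K, π.a k ∈ BR n c R (π.avg k)) ∧
    (∀ k, 2 ≤ k → k ≤ π.K → π.a k ∈ BR n c R (π.avg (k - 1)))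

/-- Time-averaged principal utility. -/
noncomputable def Util (R : ℕ → ℝ) (π : DLC) : ℝ :=
  (∑ k ∈ Finset.Icc 1 π.K, π.τ k * (1 - π.α k) * R (π.a k)) / π.Tsum π.K

/-- Time-averaged agent utility. -/
noncomputable def UtilA (c R : ℕ → ℝ) (π : DLC) : ℝ :=
  (∑ k ∈ Finset.Icc 1 π.K, π.τ k * (π.α k * R (π.a k) - c (π.a k))) / π.Tsum π.K

/-- Free-fall: the zero contract is offered on every segment after the first. -/
def FreeFall (π : DLC) : Prop := ∀ k, 2 ≤ k → k ≤ π.K → π.α k = 0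

/-- Cumulative principal utility `u_P^{(t)}(π)` up to time `t`. -/
noncomputable def cumUtil (R : ℕ → ℝ) (π : DLC) (t : ℝ) : ℝ :=
  ∑ k ∈ Finset.Icc 1 π.K,
    (min t (π.Tsum k) - min t (π.Tsum (k - 1))) * (1 - π.α k) * R (π.a k)

/-- Cumulative scalar contract `A^{(t)}` up to time `t`. -/
noncomputable def cumA (π : DLC) (t : ℝ) : ℝ :=
  ∑ k ∈ Finset.Icc 1 π.K, (min t (π.Tsum k) - min t (π.Tsum (k - 1))) * π.α k

end DLC

/-- Expected rewards of the exponential instance: `R_i = 2^i`. -/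
noncomputable def expoR : ℕ → ℝ := fun i => 2 ^ i

/-- Costs of the exponential instance: `c_1 = 0` and
`c_i = c_{i-1} + R_{i-1} − 1/2` for `i ≥ 2`; in closed form
`c_i = (2^i − 2) − (i − 1)/2`. -/
noncomputable def expoC : ℕ → ℝ := fun i =>
  if i ≤ 1 then 0 else ((2 : ℝ) ^ i - 2) - ((i : ℝ) - 1) / 2

/-! The first segment `(α_{i-1,i}, τ, i)` earns the principal `τ (1 - α_{i-1,i}) 2^i = τ`.
Replace it by a segment `(α_{i,i+1}, s, i+1)` with `s α_{i,i+1} = τ α_{i-1,i}`, which earns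
`s (1 - α_{i,i+1}) 2^(i+1) = s`, followed by a zero-contract segment of length `τ - s` on
which the agent keeps playing `i`, earning `(τ - s) 2^i`. Both actions `i` and `i+1` are best
responses at `α_{i,i+1}`, and from the end of the two new segments on the cumulative contract
and elapsed time agree with those of the original, so the rest of the contract stays valid. -/

theorem sum_Icc_one_succ_of_shift {f g : ℕ → ℝ} (hfg : ∀ k, f (k + 3) = g (k + 2)) {k : ℕ}
    (hk : 1 ≤ k) :
    ∑ j ∈ Icc 1 (k + 1), f j = f 1 + f 2 - g 1 + ∑ j ∈ Icc 1 k, g j := by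
  induction k, hk using Nat.le_induction with
  | base => simp [sum_Icc_succ_top]
  | succ k hk ih =>
    obtain ⟨m, rfl⟩ := Nat.exists_eq_add_of_le' hk
    rw [sum_Icc_succ_top (by omega), ih, hfg m, sum_Icc_succ_top (b := m + 1) (by omega)]
    ring

namespace DLC

noncomputable def splitFirst (π : DLC) (A s : ℝ) (b : ℕ) : DLC where
  K := π.K + 1
  α k := if k = 1 then A else if k = 2 then 0 else π.α (k - 1)
  τ k := if k = 1 then s else if k = 2 then π.τ 1 - s else π.τ (k - 1)
  a k := if k = 1 then b else π.a (k - 1)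

variable {π : DLC} {A s : ℝ} {b : ℕ}

@[simp] theorem splitFirst_K : (π.splitFirst A s b).K = π.K + 1 := rfl
@[simp] theorem splitFirst_α_one : (π.splitFirst A s b).α 1 = A := rfl
@[simp] theorem splitFirst_α_two : (π.splitFirst A s b).α 2 = 0 := rfl
@[simp] theorem splitFirst_τ_one : (π.splitFirst A s b).τ 1 = s := rfl
@[simp] theorem splitFirst_τ_two : (π.splitFirst A s b).τ 2 = π.τ 1 - s := rfl
@[simp] theorem splitFirst_a_one : (π.splitFirst A s b).a 1 = b := rfl

@[simp] theorem splitFirst_α_add_three (k : ℕ) :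
    (π.splitFirst A s b).α (k + 3) = π.α (k + 2) := rfl
@[simp] theorem splitFirst_τ_add_three (k : ℕ) :
    (π.splitFirst A s b).τ (k + 3) = π.τ (k + 2) := rfl
@[simp] theorem splitFirst_a_add_two (k : ℕ) :
    (π.splitFirst A s b).a (k + 2) = π.a (k + 1) := rfl

theorem splitFirst_Tsum_succ {k : ℕ} (hk : 1 ≤ k) :
    (π.splitFirst A s b).Tsum (k + 1) = π.Tsum k := by
  rw [Tsum, sum_Icc_one_succ_of_shift (g := π.τ) (fun k => rfl) hk, Tsum]
  simp

theorem splitFirst_Asum_succ (hAs : A * s = π.α 1 * π.τ 1) {k : ℕ} (hk : 1 ≤ k) :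
    (π.splitFirst A s b).Asum (k + 1) = π.Asum k := by
  rw [Asum, sum_Icc_one_succ_of_shift (g := fun j => π.α j * π.τ j) (fun k => rfl) hk, Asum]
  simp [hAs]

theorem splitFirst_avg_one (hs : s ≠ 0) : (π.splitFirst A s b).avg 1 = A := by
  simp [avg, Asum, Tsum, hs]

theorem splitFirst_avg_succ (hAs : A * s = π.α 1 * π.τ 1) {k : ℕ} (hk : 1 ≤ k) :
    (π.splitFirst A s b).avg (k + 1) = π.avg k := by
  rw [avg, splitFirst_Asum_succ hAs hk, splitFirst_Tsum_succ hk, avg]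

theorem FreeFall.splitFirst (hff : π.FreeFall) : (π.splitFirst A s b).FreeFall := by
  intro k hk2 hkK
  obtain rfl | ⟨m, rfl⟩ : k = 2 ∨ ∃ m, k = m + 3 := by
    rcases Nat.exists_eq_add_of_le' hk2 with ⟨_ | m, rfl⟩ <;> simp
  · rfl
  · exact hff (m + 2) (by omega) (by simp at hkK; omega)

theorem util_splitFirst (R : ℕ → ℝ) (hK : 1 ≤ π.K) :
    (π.splitFirst A s b).Util R = π.Util R + (s * (1 - A) * R b + (π.τ 1 - s) * R (π.a 1)
      - π.τ 1 * (1 - π.α 1) * R (π.a 1)) / π.Tsum π.K := by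
  rw [Util, Util, splitFirst_K, splitFirst_Tsum_succ hK,
    sum_Icc_one_succ_of_shift (g := fun j => π.τ j * (1 - π.α j) * R (π.a j)) (fun k => rfl) hK]
  simp only [splitFirst_τ_one, splitFirst_α_one, splitFirst_a_one, splitFirst_τ_two,
    splitFirst_α_two, sub_zero, mul_one, splitFirst_a_add_two, add_div, add_comm]

theorem Valid.τ_one_pos {n : ℕ} {c R : ℕ → ℝ} (hπ : π.Valid n c R) : 0 < π.τ 1 :=
  (hπ.2.1 1 (mem_Icc.mpr ⟨le_rfl, hπ.1⟩)).2.1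

theorem Valid.Tsum_pos {n : ℕ} {c R : ℕ → ℝ} (hπ : π.Valid n c R) : 0 < π.Tsum π.K :=
  sum_pos (fun k hk => (hπ.2.1 k hk).2.1) ⟨1, mem_Icc.mpr ⟨le_rfl, hπ.1⟩⟩

theorem Valid.splitFirst {n : ℕ} {c R : ℕ → ℝ} (hπ : π.Valid n c R) (hs : 0 < s)
    (hsτ : s < π.τ 1) (hAs : A * s = π.α 1 * π.τ 1) (hb : b ∈ BR n c R A)
    (ha : π.a 1 ∈ BR n c R A) : (π.splitFirst A s b).Valid n c R := by
  obtain ⟨hK, hbasic, hend, hstart⟩ := hπ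
  have h1 : 1 ∈ Icc 1 π.K := mem_Icc.mpr ⟨le_rfl, hK⟩
  have hA : 0 ≤ A := nonneg_of_mul_nonneg_left
    (hAs ▸ mul_nonneg (hbasic 1 h1).1 (hbasic 1 h1).2.1.le) hs
  refine ⟨by simp, fun k hk => ?_, fun k hk => ?_, fun k hk2 hkK => ?_⟩
  · match k, hk with
    | 0, hk => simp at hk
    | 1, _ => exact ⟨hA, hs, hb.1⟩
    | 2, _ => exact ⟨le_rfl, sub_pos.mpr hsτ, (hbasic 1 h1).2.2⟩
    | k + 3, hk => simpa using hbasic (k + 2) (by simp at hk ⊢; omega)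
  · match k, hk with
    | 0, hk => simp at hk
    | 1, _ => rwa [splitFirst_avg_one hs.ne']
    | k + 2, hk =>
      rw [splitFirst_avg_succ hAs (by omega), splitFirst_a_add_two]
      exact hend (k + 1) (by simp at hk ⊢; omega)
  · match k, hk2, hkK with
    | 2, _, _ => rwa [splitFirst_avg_one hs.ne']
    | k + 3, _, hkK =>
      rw [show k + 3 - 1 = k + 1 + 1 from rfl, splitFirst_avg_succ hAs (by omega)]
      exact hstart (k + 2) (by omega) (by simp at hkK; omega)

end DLC

theorem expoC_of_one_le {j : ℕ} (hj : 1 ≤ j) : expoC j = 2 ^ j - 2 - ((j : ℝ) - 1) / 2 := by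
  unfold expoC
  split_ifs with h
  · obtain rfl : j = 1 := by omega
    norm_num
  · rfl

theorem indiff_expo {j : ℕ} (hj : 1 ≤ j) : indiff expoC expoR j = 1 - (2 ^ (j + 1))⁻¹ := by
  simp only [indiff, expoC_of_one_le hj, expoC_of_one_le (by omega : 1 ≤ j + 1), expoR, pow_succ]
  push_cast
  field_simp
  ring

theorem indiff_expo_pos {j : ℕ} (hj : 1 ≤ j) : 0 < indiff expoC expoR j := by
  rw [indiff_expo hj]
  exact sub_pos.2 (inv_lt_one_of_one_lt₀ (one_lt_pow₀ one_lt_two (by omega)))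

theorem indiff_expo_lt_succ {j : ℕ} (hj : 1 ≤ j) :
    indiff expoC expoR j < indiff expoC expoR (j + 1) := by
  rw [indiff_expo hj, indiff_expo (by omega)]
  gcongr
  · norm_num
  · omega

theorem one_sub_indiff_expo_mul {j : ℕ} (hj : 1 ≤ j) :
    (1 - indiff expoC expoR j) * expoR (j + 1) = 1 := by
  simp [indiff_expo hj, expoR]

theorem sub_add_one_mul_two_pow_le (j l : ℕ) : ((l : ℝ) - j + 1) * 2 ^ j ≤ 2 ^ l := by
  rcases lt_or_ge l j with h | h
  · have : (l : ℝ) - j + 1 ≤ 0 := by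
      have : (l : ℝ) + 1 ≤ j := by exact_mod_cast h
      linarith
    exact (mul_nonpos_of_nonpos_of_nonneg this (by positivity)).trans (by positivity)
  · obtain ⟨m, rfl⟩ := Nat.exists_eq_add_of_le h
    have : (m : ℝ) + 1 ≤ 2 ^ m := by exact_mod_cast Nat.lt_two_pow_self
    push_cast
    rw [pow_add]
    nlinarith [pow_pos (two_pos : (0 : ℝ) < 2) j]

-- The bracket is nonnegative and vanishes at `l = j` and `l = j + 1`.
theorem payoff_expo_indiff {j l : ℕ} (hj : 1 ≤ j) (hl : 1 ≤ l) :
    indiff expoC expoR j * expoR l - expoC l =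
      1 + j / 2 - (2 ^ l / 2 ^ (j + 1) - ((l : ℝ) - j + 1) / 2) := by
  rw [indiff_expo hj, expoC_of_one_le hl, expoR]
  field_simp
  ring

theorem mem_BR_expo_indiff {n j k : ℕ} (hj : 1 ≤ j) (hjn : j + 1 ≤ n) (hk : k = j ∨ k = j + 1) :
    k ∈ BR n expoC expoR (indiff expoC expoR j) := by
  have hk1 : 1 ≤ k := by omega
  have hk_max : 2 ^ k / 2 ^ (j + 1) - ((k : ℝ) - j + 1) / 2 = 0 := by
    rcases hk with rfl | rfl <;> rw [pow_succ] <;> push_cast <;> field_simp <;> ring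
  refine ⟨mem_Icc.mpr ⟨hk1, by omega⟩, fun l hl => ?_⟩
  have hl_le : ((l : ℝ) - j + 1) / 2 ≤ 2 ^ l / 2 ^ (j + 1) := by
    rw [le_div_iff₀ (by positivity), pow_succ]
    linarith [sub_add_one_mul_two_pow_le j l]
  rw [payoff_expo_indiff hj (mem_Icc.mp hl).1, payoff_expo_indiff hj hk1]
  linarith

theorem exponential_must_start_at_top_general (n : ℕ)
    (π : DLC) (hπ : π.Valid n expoC expoR) (hff : π.FreeFall)
    (i : ℕ) (hi2 : 2 ≤ i) (hin : i ≤ n - 1)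
    (hα1 : π.α 1 = indiff expoC expoR (i - 1)) (ha1 : π.a 1 = i) :
    ∃ π' : DLC, π'.Valid n expoC expoR ∧ π'.FreeFall ∧
      π'.Util expoR > π.Util expoR := by
  set A := indiff expoC expoR i
  have hi : i - 1 + 1 = i := by omega
  have hα_pos : 0 < π.α 1 := hα1 ▸ indiff_expo_pos (by omega)
  have hαA : π.α 1 < A := by
    simpa only [hα1, hi] using indiff_expo_lt_succ (j := i - 1) (by omega)
  have hA_pos := hα_pos.trans hαA
  have hτ := hπ.τ_one_pos
  set s := π.α 1 * π.τ 1 / A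
  have hs : 0 < s := div_pos (mul_pos hα_pos hτ) hA_pos
  have hsτ : s < π.τ 1 := (div_lt_iff₀ hA_pos).2 (by nlinarith)
  have hAs : A * s = π.α 1 * π.τ 1 := mul_div_cancel₀ _ hA_pos.ne'
  have hBR : ∀ k, k = i ∨ k = i + 1 → k ∈ BR n expoC expoR A :=
    fun k hk => mem_BR_expo_indiff (by omega) (by omega) hk
  refine ⟨π.splitFirst A s (i + 1),
    hπ.splitFirst hs hsτ hAs (hBR _ (.inr rfl)) (hBR _ (.inl ha1)), hff.splitFirst, ?_⟩
  have hgain : s * (1 - A) * expoR (i + 1) + (π.τ 1 - s) * expoR (π.a 1)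
      - π.τ 1 * (1 - π.α 1) * expoR (π.a 1) = (π.τ 1 - s) * (expoR i - 1) := by
    have hA_one := one_sub_indiff_expo_mul (j := i) (by omega)
    have hα_one := one_sub_indiff_expo_mul (j := i - 1) (by omega)
    rw [hi, ← hα1] at hα_one
    rw [ha1]
    linear_combination s * hA_one - π.τ 1 * hα_one
  rw [DLC.util_splitFirst _ hπ.1, hgain, gt_iff_lt, lt_add_iff_pos_right]
  exact div_pos (mul_pos (sub_pos.2 hsτ) (sub_pos.2 (one_lt_pow₀ one_lt_two (by omega))))
    hπ.Tsum_pos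

/-- In the exponential instance, any valid free-fall dynamic
linear contract starting at an indifference point `α_{i-1,i}` with
`2 ≤ i ≤ n − 1` (strictly below the top indifference point) is strictly
dominated by some valid free-fall contract. -/
theorem exponential_must_start_at_top (n : ℕ) (hn : 4 ≤ n)
    (π : DLC) (hπ : π.Valid n expoC expoR) (hff : π.FreeFall)
    (i : ℕ) (hi2 : 2 ≤ i) (hin : i ≤ n - 1)
    (hα1 : π.α 1 = indiff expoC expoR (i - 1)) (ha1 : π.a 1 = i) :
    ∃ π' : DLC, π'.Valid n expoC expoR ∧ π'.FreeFall ∧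
      π'.Util expoR > π.Util expoR :=
  exponential_must_start_at_top_general n π hπ hff i hi2 hin hα1 ha1
end

section
/- Fix a linear contract instance with optimal static principal utility R_⋆ := max_{1≤i≤n} (1 − α_{i−1,i})·R_i > 0 (with α_{0,1} := 0), and let Φ := Σ_{i=1}^{n−1} (α_{i,i+1} − α_{i−1,i})·R_i. Let ε > 0 and γ > exp(Φ/(ε·R_⋆)). Then there is no valid dynamic linear contract π with α^k ≤ α_{n−1,n} for all k and total duration T := Σ_k τ^k such that the cumulative principal utility satisfies u_P^{(t)}(π) ≥ (1+ε)·R_⋆·t for every t ∈ [T/γ, T]. (No dynamic contract can maintain a (1+ε)-multiplicative advantage over the optimal static contract throughout a time window of multiplicative width exceeding exp(Φ/(ε·R_⋆)).) -/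
open Finset

/-!
Let `W(t)` be the cumulative welfare (principal plus agent utility) up to time `t`. Since the
agent best-responds to the historical average contract at both ends of every segment, its
cumulative utility at the end of segment `k` is `T_k · (ᾱ^k R_{a^k} - c_{a^k}) ≥ 0`, so
`W = u_P + u_A ≥ u_P`; and `W` grows at rate `R_i - c_i ≤ R_⋆ + Φ`.
On a segment played with action `i` ending at time `T_k`, `W(t) = Q + t (R_i - c_i)`, and the
static bound `(1 - ᾱ^k) R_i ≤ R_⋆` together with `u_P(T_k) ≥ (1+ε) R_⋆ T_k` gives `Q ≥ ε R_⋆ T_k`.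
Hence `W(t)/t + ε R_⋆ log t` is nonincreasing on `[T/γ, T]`, and comparing its values at the two
ends yields `ε R_⋆ log γ ≤ Φ`.
-/

theorem div_add_mul_log_le {Q κ s t : ℝ} (hs : 0 < s) (hst : s ≤ t) (hκ : 0 ≤ κ)
    (hQ : κ * t ≤ Q) : Q / t + κ * Real.log t ≤ Q / s + κ * Real.log s := by
  have ht : 0 < t := hs.trans_le hst
  have hlog : Real.log t - Real.log s ≤ t / s - 1 := by
    rw [← Real.log_div ht.ne' hs.ne']
    exact Real.log_le_sub_one_of_pos (div_pos ht hs)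
  have hdiff : κ * (t / s - 1) ≤ Q / s - Q / t := by
    calc κ * (t / s - 1) = κ * t * (t - s) / (s * t) := by field_simp
      _ ≤ Q * (t - s) / (s * t) := by gcongr
      _ = Q / s - Q / t := by field_simp
  linarith [mul_le_mul_of_nonneg_left hlog hκ]

theorem le_of_forall_segment {T : ℕ → ℝ} {G : ℝ → ℝ} {K : ℕ} {t : ℝ} (h0 : T 0 < t)
    (hT : ∀ k < K, T k ≤ T (k + 1))
    (hseg : ∀ k < K, ∀ s ∈ Set.Icc (T k) (T (k + 1)), t ≤ s → G (T (k + 1)) ≤ G s) :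
    ∀ k ≤ K, t ≤ T k → G (T k) ≤ G t := by
  intro k
  induction k with
  | zero => intro _ ht; linarith
  | succ k ih =>
    intro hk ht
    by_cases htk : t ≤ T k
    · exact (hseg k hk (T k) ⟨le_rfl, hT k hk⟩ htk).trans (ih (by omega) htk)
    · exact hseg k hk t ⟨(not_le.1 htk).le, ht⟩ le_rfl

theorem agentUtil_eq_of_mem_BR {n : ℕ} {c R : ℕ → ℝ} {x : ℝ} {i j : ℕ}
    (hi : i ∈ BR n c R x) (hj : j ∈ BR n c R x) : x * R i - c i = x * R j - c j :=
  le_antisymm (hj.2 i hi.1) (hi.2 j hj.1)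

namespace LinInstance

variable {n : ℕ} {c R : ℕ → ℝ}

theorem R_nonneg (h : LinInstance n c R) {i : ℕ} (hi : i ∈ Icc 1 n) : 0 ≤ R i := by
  obtain ⟨hi1, hin⟩ := mem_Icc.1 hi
  clear hi
  induction i, hi1 using Nat.le_induction with
  | base => exact h.2.2.1
  | succ m hm ih => exact (ih (by omega)).trans (h.2.2.2.2.1 m hm (by omega)).le

theorem bp_pred_le (h : LinInstance n c R) {i : ℕ} (hi : i ≤ n - 1) :
    bp c R (i - 1) ≤ bp c R i := by
  rcases i with _ | _ | i
  · exact le_rfl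
  · simpa [bp] using h.2.2.2.2.2.1.le
  · simpa [bp] using (h.2.2.2.2.2.2.1 (i + 1) (by omega) hi).le

theorem bp_sub_mul_nonneg (h : LinInstance n c R) {j : ℕ} (hj : j ∈ Icc 1 (n - 1)) :
    0 ≤ (bp c R j - bp c R (j - 1)) * R j := by
  obtain ⟨hj1, hjn⟩ := mem_Icc.1 hj
  exact mul_nonneg (sub_nonneg.2 (h.bp_pred_le hjn)) (h.R_nonneg (mem_Icc.2 ⟨hj1, by omega⟩))

theorem sum_bp_sub_mul_eq (h : LinInstance n c R) {m : ℕ} (hm : m + 1 ≤ n) :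
    ∑ j ∈ Icc 1 m, (bp c R j - bp c R (j - 1)) * R j = bp c R m * R (m + 1) - c (m + 1) := by
  induction m with
  | zero => simp [bp, h.2.1]
  | succ m ih =>
    have hR : R (m + 1) < R (m + 2) := h.2.2.2.2.1 (m + 1) (by omega) (by omega)
    have hbp : bp c R (m + 1) * (R (m + 2) - R (m + 1)) = c (m + 2) - c (m + 1) := by
      simp only [bp, indiff, if_neg (Nat.succ_ne_zero m)]
      field_simp [sub_ne_zero.2 hR.ne']
    rw [sum_Icc_succ_top (by omega), ih (by omega), Nat.add_sub_cancel]
    linarith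

theorem welfare_le (h : LinInstance n c R) {Rstar : ℝ}
    (hRstar : IsGreatest ((fun i => (1 - bp c R (i - 1)) * R i) '' Set.Icc 1 n) Rstar)
    {i : ℕ} (hi : i ∈ Icc 1 n) :
    R i - c i ≤ Rstar + ∑ j ∈ Icc 1 (n - 1), (bp c R j - bp c R (j - 1)) * R j := by
  obtain ⟨hi1, hin⟩ := mem_Icc.1 hi
  have hstatic : (1 - bp c R (i - 1)) * R i ≤ Rstar := hRstar.2 ⟨i, ⟨hi1, hin⟩, rfl⟩
  have hsum := h.sum_bp_sub_mul_eq (m := i - 1) (by omega)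
  rw [Nat.sub_add_cancel hi1] at hsum
  have hmono : ∑ j ∈ Icc 1 (i - 1), (bp c R j - bp c R (j - 1)) * R j
      ≤ ∑ j ∈ Icc 1 (n - 1), (bp c R j - bp c R (j - 1)) * R j :=
    sum_le_sum_of_subset_of_nonneg (Icc_subset_Icc_right (by omega))
      fun j hj _ => h.bp_sub_mul_nonneg hj
  linarith

theorem bp_pred_le_of_mem_BR (h : LinInstance n c R) {x : ℝ} (hx : 0 ≤ x) {i : ℕ}
    (hi : i ∈ BR n c R x) : bp c R (i - 1) ≤ x := by
  obtain ⟨hiI, hmax⟩ := hi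
  obtain ⟨hi1, hin⟩ := mem_Icc.1 hiI
  rcases i with _ | _ | i
  · omega
  · simpa [bp] using hx
  · have hR : R (i + 1) < R (i + 2) := h.2.2.2.2.1 (i + 1) (by omega) hin
    have hcmp := hmax (i + 1) (mem_Icc.2 ⟨by omega, by omega⟩)
    simp only [bp, indiff, Nat.add_sub_cancel, if_neg (Nat.succ_ne_zero i)]
    rw [div_le_iff₀ (sub_pos.2 hR)]
    linarith

theorem principalUtil_le (h : LinInstance n c R) {Rstar : ℝ}
    (hRstar : IsGreatest ((fun i => (1 - bp c R (i - 1)) * R i) '' Set.Icc 1 n) Rstar)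
    {x : ℝ} (hx : 0 ≤ x) {i : ℕ} (hi : i ∈ BR n c R x) : (1 - x) * R i ≤ Rstar := by
  obtain ⟨hi1, hin⟩ := mem_Icc.1 hi.1
  have hstatic : (1 - bp c R (i - 1)) * R i ≤ Rstar := hRstar.2 ⟨i, ⟨hi1, hin⟩, rfl⟩
  have hx' : 1 - x ≤ 1 - bp c R (i - 1) := by linarith [h.bp_pred_le_of_mem_BR hx hi]
  exact (mul_le_mul_of_nonneg_right hx' (h.R_nonneg hi.1)).trans hstatic

theorem agentUtil_nonneg (h : LinInstance n c R) {x : ℝ} (hx : 0 ≤ x) {i : ℕ}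
    (hi : i ∈ BR n c R x) : 0 ≤ x * R i - c i := by
  have h1 := hi.2 1 (mem_Icc.2 ⟨le_rfl, by linarith [h.1]⟩)
  rw [h.2.1] at h1
  nlinarith [h.2.2.1]

end LinInstance

namespace DLC

variable {π : DLC} {n : ℕ} {c R : ℕ → ℝ}

/-- `∫₀ᵗ w(k(s)) ds`, where `k(s)` is the index of the segment containing time `s`. -/
noncomputable def cum (π : DLC) (w : ℕ → ℝ) (t : ℝ) : ℝ :=
  ∑ k ∈ Icc 1 π.K, (min t (π.Tsum k) - min t (π.Tsum (k - 1))) * w k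

noncomputable def welfare (c R : ℕ → ℝ) (π : DLC) (t : ℝ) : ℝ :=
  π.cum (fun k => R (π.a k) - c (π.a k)) t

theorem cumUtil_eq_cum (R : ℕ → ℝ) (π : DLC) (t : ℝ) :
    π.cumUtil R t = π.cum (fun k => (1 - π.α k) * R (π.a k)) t := by
  simp only [cumUtil, cum, mul_assoc]

theorem cum_add (π : DLC) (w v : ℕ → ℝ) (t : ℝ) :
    π.cum (fun k => w k + v k) t = π.cum w t + π.cum v t := by
  simp only [cum, mul_add, sum_add_distrib]

@[simp]
theorem Tsum_zero (π : DLC) : π.Tsum 0 = 0 := by simp [Tsum]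

@[simp]
theorem Asum_zero (π : DLC) : π.Asum 0 = 0 := by simp [Asum]

theorem Tsum_succ (π : DLC) (k : ℕ) : π.Tsum (k + 1) = π.Tsum k + π.τ (k + 1) :=
  sum_Icc_succ_top (by omega) _

theorem Asum_succ (π : DLC) (k : ℕ) : π.Asum (k + 1) = π.Asum k + π.α (k + 1) * π.τ (k + 1) :=
  sum_Icc_succ_top (by omega) _

namespace Valid

theorem Tsum_mono (hπ : π.Valid n c R) {j k : ℕ} (hjk : j ≤ k) (hk : k ≤ π.K) :
    π.Tsum j ≤ π.Tsum k :=
  sum_le_sum_of_subset_of_nonneg (Icc_subset_Icc_right hjk) fun i hi _ =>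
    (hπ.2.1 i (mem_Icc.2 ⟨(mem_Icc.1 hi).1, (mem_Icc.1 hi).2.trans hk⟩)).2.1.le

theorem Tsum_nonneg (hπ : π.Valid n c R) {k : ℕ} (hk : k ≤ π.K) : 0 ≤ π.Tsum k := by
  simpa using hπ.Tsum_mono (Nat.zero_le k) hk

theorem Tsum_pos_s13 (hπ : π.Valid n c R) {k : ℕ} (hk1 : 1 ≤ k) (hk : k ≤ π.K) : 0 < π.Tsum k := by
  have hτ := (hπ.2.1 1 (mem_Icc.2 ⟨le_rfl, hπ.1⟩)).2.1
  have h1 := hπ.Tsum_mono hk1 hk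
  simp only [Tsum, Icc_self, sum_singleton] at h1 ⊢
  linarith

theorem avg_nonneg (hπ : π.Valid n c R) {k : ℕ} (hk : k ≤ π.K) : 0 ≤ π.avg k :=
  div_nonneg (sum_nonneg fun j hj => by
    have hj' := hπ.2.1 j (mem_Icc.2 ⟨(mem_Icc.1 hj).1, (mem_Icc.1 hj).2.trans hk⟩)
    exact mul_nonneg hj'.1 hj'.2.1.le) (hπ.Tsum_nonneg hk)

theorem avg_mul_Tsum (hπ : π.Valid n c R) {k : ℕ} (hk1 : 1 ≤ k) (hk : k ≤ π.K) :
    π.avg k * π.Tsum k = π.Asum k :=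
  div_mul_cancel₀ _ (hπ.Tsum_pos_s13 hk1 hk).ne'

theorem cum_zero (hπ : π.Valid n c R) (w : ℕ → ℝ) : π.cum w 0 = 0 :=
  sum_eq_zero fun k hk => by
    obtain ⟨-, hkK⟩ := mem_Icc.1 hk
    rw [min_eq_left (hπ.Tsum_nonneg hkK), min_eq_left (hπ.Tsum_nonneg (by omega))]
    ring

theorem cum_sub_cum (hπ : π.Valid n c R) (w : ℕ → ℝ) {k : ℕ} (hk : k < π.K) {t t' : ℝ}
    (ht : t ∈ Set.Icc (π.Tsum k) (π.Tsum (k + 1)))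
    (ht' : t' ∈ Set.Icc (π.Tsum k) (π.Tsum (k + 1))) :
    π.cum w t - π.cum w t' = (t - t') * w (k + 1) := by
  rw [cum, cum, ← sum_sub_distrib, sum_eq_single (k + 1)]
  · simp only [Nat.add_sub_cancel, min_eq_left ht.2, min_eq_right ht.1, min_eq_left ht'.2,
      min_eq_right ht'.1]
    ring
  · intro j hj hjk
    obtain ⟨hj1, hjK⟩ := mem_Icc.1 hj
    rcases lt_or_gt_of_ne hjk with hlt | hgt
    · have h1 : π.Tsum j ≤ π.Tsum k := hπ.Tsum_mono (by omega) hk.le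
      have h2 : π.Tsum (j - 1) ≤ π.Tsum k := hπ.Tsum_mono (by omega) hk.le
      rw [min_eq_right (h1.trans ht.1), min_eq_right (h2.trans ht.1),
        min_eq_right (h1.trans ht'.1), min_eq_right (h2.trans ht'.1)]
      ring
    · have h1 : π.Tsum (k + 1) ≤ π.Tsum j := hπ.Tsum_mono (by omega) hjK
      have h2 : π.Tsum (k + 1) ≤ π.Tsum (j - 1) := hπ.Tsum_mono (by omega) (by omega)
      rw [min_eq_left (ht.2.trans h1), min_eq_left (ht.2.trans h2),
        min_eq_left (ht'.2.trans h1), min_eq_left (ht'.2.trans h2)]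
      ring
  · intro h
    exact absurd (mem_Icc.2 ⟨by omega, hk⟩) h

theorem cum_le_mul (hπ : π.Valid n c R) {w : ℕ → ℝ} {M : ℝ} (hw : ∀ k ∈ Icc 1 π.K, w k ≤ M)
    {s : ℝ} (hs : s ∈ Set.Icc 0 (π.Tsum π.K)) : π.cum w s ≤ M * s := by
  suffices ∀ k ≤ π.K, ∀ s ∈ Set.Icc 0 (π.Tsum k), π.cum w s ≤ M * s from this π.K le_rfl s hs
  intro k
  induction k with
  | zero =>
    intro _ s hs
    obtain rfl : s = 0 := le_antisymm (by simpa using hs.2) hs.1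
    simp [hπ.cum_zero]
  | succ k ih =>
    intro hk s hs
    by_cases hsk : s ≤ π.Tsum k
    · exact ih (by omega) s ⟨hs.1, hsk⟩
    · have hkK : k < π.K := hk
      have hstep := hπ.cum_sub_cum w hkK ⟨(not_le.1 hsk).le, hs.2⟩
        ⟨le_rfl, hπ.Tsum_mono k.le_succ hk⟩
      have hprev := ih hkK.le (π.Tsum k) ⟨hπ.Tsum_nonneg hkK.le, le_rfl⟩
      have hwk := mul_le_mul_of_nonneg_left (hw (k + 1) (mem_Icc.2 ⟨by omega, hk⟩))
        (sub_nonneg.2 (not_le.1 hsk).le)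
      linarith

theorem agentUtil_succ_eq (hπ : π.Valid n c R) {k : ℕ} (hk : k < π.K) :
    π.Asum k * R (π.a (k + 1)) - π.Tsum k * c (π.a (k + 1))
      = π.Asum k * R (π.a k) - π.Tsum k * c (π.a k) := by
  rcases Nat.eq_zero_or_pos k with rfl | hk1
  · simp
  · have hend := hπ.2.2.1 k (mem_Icc.2 ⟨hk1, hk.le⟩)
    have hstart := hπ.2.2.2 (k + 1) (by omega) hk
    rw [Nat.add_sub_cancel] at hstart
    rw [← hπ.avg_mul_Tsum hk1 hk.le]
    linear_combination π.Tsum k * agentUtil_eq_of_mem_BR hstart hend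

theorem cum_agentUtil_Tsum (hπ : π.Valid n c R) {k : ℕ} (hk : k ≤ π.K) :
    π.cum (fun j => π.α j * R (π.a j) - c (π.a j)) (π.Tsum k)
      = π.Asum k * R (π.a k) - π.Tsum k * c (π.a k) := by
  induction k with
  | zero => simp [hπ.cum_zero]
  | succ k ih =>
    have hkK : k < π.K := hk
    have hle := hπ.Tsum_mono k.le_succ hk
    have hstep := hπ.cum_sub_cum (fun j => π.α j * R (π.a j) - c (π.a j)) hkK
      ⟨hle, le_rfl⟩ ⟨le_rfl, hle⟩
    rw [ih hkK.le, ← hπ.agentUtil_succ_eq hkK] at hstep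
    rw [Tsum_succ] at hstep ⊢
    rw [Asum_succ]
    linear_combination hstep

theorem welfare_Tsum (hπ : π.Valid n c R) {k : ℕ} (hk : k ≤ π.K) :
    π.welfare c R (π.Tsum k)
      = π.cumUtil R (π.Tsum k) + (π.Asum k * R (π.a k) - π.Tsum k * c (π.a k)) := by
  rw [← hπ.cum_agentUtil_Tsum hk, cumUtil_eq_cum, ← cum_add, welfare]
  congr 1
  funext j
  ring

theorem welfare_div_add_mul_log_le (hInst : LinInstance n c R) {Rstar : ℝ}
    (hRstar : IsGreatest ((fun i => (1 - bp c R (i - 1)) * R i) '' Set.Icc 1 n) Rstar)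
    (hπ : π.Valid n c R) {k : ℕ} (hk : k < π.K) {s : ℝ}
    (hs : s ∈ Set.Icc (π.Tsum k) (π.Tsum (k + 1))) (hs0 : 0 < s) {κ : ℝ} (hκ : 0 ≤ κ)
    (hu : (Rstar + κ) * π.Tsum (k + 1) ≤ π.cumUtil R (π.Tsum (k + 1))) :
    π.welfare c R (π.Tsum (k + 1)) / π.Tsum (k + 1) + κ * Real.log (π.Tsum (k + 1))
      ≤ π.welfare c R s / s + κ * Real.log s := by
  set t := π.Tsum (k + 1)
  set a := π.a (k + 1)
  have ht : 0 < t := hs0.trans_le hs.2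
  have hstatic : t * ((1 - π.avg (k + 1)) * R a) ≤ t * Rstar :=
    mul_le_mul_of_nonneg_left (hInst.principalUtil_le hRstar (hπ.avg_nonneg hk)
      (hπ.2.2.1 (k + 1) (mem_Icc.2 ⟨by omega, hk⟩))) ht.le
  have havg : π.avg (k + 1) * t = π.Asum (k + 1) := hπ.avg_mul_Tsum (by omega) hk
  have hWt : π.welfare c R t = π.cumUtil R t + (π.Asum (k + 1) * R a - t * c a) :=
    hπ.welfare_Tsum hk
  have hWs : π.welfare c R s = π.welfare c R t - (t - s) * (R a - c a) := by
    have := hπ.cum_sub_cum (fun j => R (π.a j) - c (π.a j)) hk ⟨hs.1.trans hs.2, le_rfl⟩ hs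
    rw [welfare, welfare]
    linarith
  set Q := π.welfare c R t - t * (R a - c a)
  have hQ : κ * t ≤ Q := by
    have hQeq : Q = π.cumUtil R t - t * ((1 - π.avg (k + 1)) * R a) := by
      simp only [Q]
      rw [hWt, ← havg]
      ring
    linarith
  have hWt' : π.welfare c R t / t = Q / t + (R a - c a) := by field_simp; ring
  have hWs' : π.welfare c R s / s = Q / s + (R a - c a) := by rw [hWs]; field_simp; ring
  rw [hWt', hWs']
  linarith [div_add_mul_log_le hs0 hs.2 hκ hQ]

end Valid

end DLC

/-- If `γ > exp(Φ/(ε·R⋆))`, no valid dynamic linear contract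
(with scalars capped at `α_{n-1,n}`) of total duration `T` maintains cumulative
principal utility at least `(1+ε)·R⋆·t` for every `t ∈ [T/γ, T]`. -/
theorem no_persistent_advantage (n : ℕ) (c R : ℕ → ℝ) (hInst : LinInstance n c R)
    (Rstar : ℝ)
    (hRstar : IsGreatest ((fun i => (1 - bp c R (i - 1)) * R i) '' Set.Icc 1 n) Rstar)
    (hRpos : 0 < Rstar)
    (Φ : ℝ) (hΦ : Φ = ∑ i ∈ Finset.Icc 1 (n - 1), (bp c R i - bp c R (i - 1)) * R i)
    (ε γ : ℝ) (hε : 0 < ε) (hγ : Real.exp (Φ / (ε * Rstar)) < γ) :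
    ¬ ∃ π : DLC, π.Valid n c R ∧
        (∀ k ∈ Finset.Icc 1 π.K, π.α k ≤ bp c R (n - 1)) ∧
        ∀ t ∈ Set.Icc (π.Tsum π.K / γ) (π.Tsum π.K),
          (1 + ε) * Rstar * t ≤ π.cumUtil R t := by
  rintro ⟨π, hπ, -, hbound⟩
  set T := π.Tsum π.K
  have hκ : 0 < ε * Rstar := mul_pos hε hRpos
  have hΦ0 : 0 ≤ Φ := hΦ ▸ sum_nonneg fun j hj => hInst.bp_sub_mul_nonneg hj
  have hγ1 : 1 < γ := (Real.one_le_exp (div_nonneg hΦ0 hκ.le)).trans_lt hγ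
  have hT : 0 < T := hπ.Tsum_pos_s13 hπ.1 le_rfl
  have ht0 : 0 < T / γ := div_pos hT (by linarith)
  have htT : T / γ ≤ T := div_le_self hT.le hγ1.le
  have hdecay := le_of_forall_segment (G := fun s => π.welfare c R s / s + ε * Rstar * Real.log s)
    (by simpa using ht0) (fun k hk => hπ.Tsum_mono k.le_succ hk)
    (fun k hk s hs hts => hπ.welfare_div_add_mul_log_le hInst hRstar hk hs (ht0.trans_le hts)
      hκ.le (by linarith [hbound _ ⟨hts.trans hs.2, hπ.Tsum_mono hk le_rfl⟩]))
    π.K le_rfl htT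
  have hend : Rstar + ε * Rstar ≤ π.welfare c R T / T := by
    have hK := mem_Icc.2 ⟨hπ.1, le_rfl⟩
    have hagent := hInst.agentUtil_nonneg (hπ.avg_nonneg le_rfl) (hπ.2.2.1 π.K hK)
    rw [le_div_iff₀ hT, hπ.welfare_Tsum le_rfl, ← hπ.avg_mul_Tsum hπ.1 le_rfl]
    linarith [hbound T ⟨htT, le_rfl⟩, mul_nonneg hT.le hagent]
  have hstart : π.welfare c R (T / γ) / (T / γ) ≤ Rstar + Φ := by
    rw [div_le_iff₀ ht0]
    exact hπ.cum_le_mul (fun k hk => hΦ ▸ hInst.welfare_le hRstar (hπ.2.1 k hk).2.2) ⟨ht0.le, htT⟩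
  have hlogγ : Φ < ε * Rstar * Real.log γ := by
    rwa [← div_lt_iff₀' hκ, Real.lt_log_iff_exp_lt (by linarith)]
  rw [Real.log_div hT.ne' (by linarith)] at hdecay
  linarith
end
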